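/- Let p be a prime, F ∈ ℂ_p[X] a nonzero polynomial, and ζ ∈ ℂ_p a root of unity of order p^k·m with p ∤ m. Let M be a nonempty subset of Gal(ℚ(ζ)/ℚ) such that F(σ(ζ)) ≠ 0 for all σ ∈ M. Then |(1/#M)·Σ_{σ∈M} log|F(σ(ζ))|_p − log|F|_p| ≤ (deg F / #M)·(c(F) + k·log p). -/

import Mathlib

/-!
Factor `F = a ∏ (X - α)` over `K`. Both sides of the estimate are multiplicative in this
factorisation: by Gauss's lemma `|F|_p = |a| ∏ max(1, |α|)`, while
`∏_σ |F(σζ)| = |a|^#M ∏_α ∏_σ |σζ - α|`. So it suffices to show, for every root `α`, that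
`c · max(1, |α|)^#M ≤ ∏_σ |σζ - α| ≤ max(1, |α|)^#M` with `c = (inf(F) / |F|_p) · p^(-k)`.

The upper bound, and the lower one when `|α| > 1`, are the ultrametric inequality. When `|α| ≤ 1`
only the conjugates `ξ` with `|ξ - α| < 1` contribute. If `ξ₀` is the nearest one, the quotients
`ξ / ξ₀` of the others are `p^k`-th roots of unity different from `1` (a root of unity of order
prime to `p` has distance `1` from `1`), so the product of their distances to `ξ₀` is at least
`∏_{η^(p^k) = 1, η ≠ 1} |1 - η| = |p^k|`; and `|ξ₀ - α| · |F|_p ≥ |F(ξ₀)| ≥ inf(F)`.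
-/

/-- The `p`-adic Gauss norm of a polynomial: the maximum of the norms of its
coefficients. -/
noncomputable def gaussNorm {K : Type*} [NontriviallyNormedField K] (F : Polynomial K) : ℝ :=
  ((F.support.sup fun i => ‖F.coeff i‖₊ : NNReal) : ℝ)

/-- `inf(F)`: the infimum of `|F(ξ)|_p` over roots of unity `ξ` with `F(ξ) ≠ 0`. -/
noncomputable def infF {K : Type*} [NontriviallyNormedField K] (F : Polynomial K) : ℝ :=
  sInf {r : ℝ | ∃ ξ : K, IsOfFinOrder ξ ∧ F.eval ξ ≠ 0 ∧ r = ‖F.eval ξ‖}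

/-- `c(F) = -log(inf(F)/|F|_p)`. -/
noncomputable def cF {K : Type*} [NontriviallyNormedField K] (F : Polynomial K) : ℝ :=
  -Real.log (infF F / gaussNorm F)

open Polynomial hiding gaussNorm gaussNorm_C gaussNorm_mul
open Finset

namespace IsUltrametricDist

variable {K : Type*} [NormedField K] [IsUltrametricDist K]

lemma norm_sub_le_max (x y : K) : ‖x - y‖ ≤ max ‖x‖ ‖y‖ := by
  simpa [sub_eq_add_neg] using norm_add_le_max x (-y)

lemma norm_sub_eq_max_of_norm_ne_norm {x y : K} (h : ‖x‖ ≠ ‖y‖) : ‖x - y‖ = max ‖x‖ ‖y‖ := by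
  simpa [sub_eq_add_neg] using norm_add_eq_max_of_norm_ne_norm (x := x) (y := -y) (by simpa using h)

end IsUltrametricDist

open IsUltrametricDist

lemma IsPrimitiveRoot.prod_one_sub_nthRootsFinset_erase_one {R : Type*} [CommRing R] [IsDomain R]
    [DecidableEq R] {η : R} {n : ℕ} (hη : IsPrimitiveRoot η n) (hn : 0 < n) :
    ∏ ξ ∈ (nthRootsFinset n (1 : R)).erase 1, (1 - ξ) = n := by
  have hprod : ∏ ξ ∈ (nthRootsFinset n (1 : R)).erase 1, (X - C ξ) =
      ∑ i ∈ range n, (X : R[X]) ^ i := by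
    refine mul_left_cancel₀ (X_sub_C_ne_zero (1 : R)) ?_
    rw [mul_prod_erase _ (fun ξ => X - C ξ) (one_mem_nthRootsFinset hn),
      ← X_pow_sub_one_eq_prod hn hη, C_1, mul_comm, geom_sum_mul]
  simpa [eval_prod, eval_geom_sum] using congrArg (eval 1) hprod

section Ultrametric

variable {K : Type*} [NormedField K] [IsUltrametricDist K]

lemma IsOfFinOrder.norm_one_sub_le_one {ξ : K} (hξ : IsOfFinOrder ξ) : ‖1 - ξ‖ ≤ 1 := by
  simpa [hξ.norm_eq_one] using norm_sub_le_max (1 : K) ξ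

lemma norm_one_sub_pow_le {η : K} (hη : ‖η‖ ≤ 1) (t : ℕ) : ‖1 - η ^ t‖ ≤ ‖1 - η‖ := by
  have hgeom : ‖∑ i ∈ range t, η ^ i‖ ≤ 1 :=
    norm_sum_le_of_forall_le_of_nonneg zero_le_one fun i _ => by
      simpa using pow_le_one₀ (norm_nonneg η) hη (n := i)
  calc ‖1 - η ^ t‖ = ‖∑ i ∈ range t, η ^ i‖ * ‖1 - η‖ := by
        rw [← norm_mul, geom_sum_mul_neg]
    _ ≤ ‖1 - η‖ := mul_le_of_le_one_left (norm_nonneg _) hgeom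

lemma IsPrimitiveRoot.norm_natCast_le_prod_norm_one_sub [DecidableEq K] {η : K} {n : ℕ}
    (hη : IsPrimitiveRoot η n) (hn : 0 < n) {S : Finset K}
    (hS : S ⊆ (nthRootsFinset n (1 : K)).erase 1) :
    ‖(n : K)‖ ≤ ∏ ξ ∈ S, ‖1 - ξ‖ := by
  rw [← hη.prod_one_sub_nthRootsFinset_erase_one hn, norm_prod]
  refine prod_le_prod_of_subset_of_le_one hS (fun _ _ => norm_nonneg _) fun ξ hξ _ => ?_
  refine IsOfFinOrder.norm_one_sub_le_one (isOfFinOrder_iff_pow_eq_one.mpr ⟨n, hn, ?_⟩)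
  exact (Polynomial.mem_nthRootsFinset hn _).mp (mem_of_mem_erase hξ)

lemma IsOfFinOrder.norm_natCast_le_norm_one_sub {η : K} (hη : IsOfFinOrder η) {q : ℕ}
    (hq : q.Prime) (hqη : q ∣ orderOf η) : ‖(q : K)‖ ≤ ‖1 - η‖ := by
  classical
  have hd : 0 < orderOf η := hη.orderOf_pos
  have hdq : orderOf η / q ∣ orderOf η := Nat.div_dvd_of_dvd hqη
  have hμ : IsPrimitiveRoot (η ^ (orderOf η / q)) q := by
    simpa [Nat.div_div_self hqη hd.ne'] using
      (IsPrimitiveRoot.orderOf η).pow_of_dvd (Nat.div_pos (Nat.le_of_dvd hd hqη) hq.pos).ne' hdq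
  calc ‖(q : K)‖ ≤ ∏ ξ ∈ {η ^ (orderOf η / q)}, ‖1 - ξ‖ := by
        refine hμ.norm_natCast_le_prod_norm_one_sub hq.pos (singleton_subset_iff.mpr ?_)
        refine mem_erase.mpr ⟨fun h => hq.one_lt.ne' ?_,
          (Polynomial.mem_nthRootsFinset hq.pos _).mpr hμ.pow_eq_one⟩
        rw [hμ.eq_orderOf, h, orderOf_one]
    _ ≤ ‖1 - η‖ := by
        rw [prod_singleton]
        exact norm_one_sub_pow_le hη.norm_eq_one.le _

end Ultrametric

section ResidueChar

variable {K : Type*} [NormedField K] [IsUltrametricDist K] {p : ℕ}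

lemma norm_natCast_eq_one_of_not_dvd (hp : p.Prime) (hp1 : ‖(p : K)‖ < 1) {n : ℕ} (hn : ¬ p ∣ n) :
    ‖(n : K)‖ = 1 := by
  obtain ⟨a, b, hab⟩ := Nat.isCoprime_iff_coprime.mpr ((Nat.Prime.coprime_iff_not_dvd hp).mpr hn)
  have hone : (a : K) * p + b * n = 1 := by exact_mod_cast congrArg (Int.cast (R := K)) hab
  have hle : 1 ≤ max (‖(a : K)‖ * ‖(p : K)‖) (‖(b : K)‖ * ‖(n : K)‖) := by
    simpa only [hone, norm_one, norm_mul] using norm_add_le_max ((a : K) * p) (b * n)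
  have ha := norm_intCast_le_one K a
  have hb := norm_intCast_le_one K b
  refine le_antisymm (norm_natCast_le_one K n) ?_
  rcases le_max_iff.mp hle with h | h
  · nlinarith [norm_nonneg (p : K), norm_nonneg (a : K)]
  · nlinarith [norm_nonneg (n : K), norm_nonneg (b : K)]

lemma inv_le_norm_natCast_of_prime (hp : p.Prime) (hpnorm : ‖(p : K)‖ = (p : ℝ)⁻¹) {q : ℕ}
    (hq : q.Prime) : (p : ℝ)⁻¹ ≤ ‖(q : K)‖ := by
  have hp1 : ‖(p : K)‖ < 1 := hpnorm ▸ inv_lt_one_of_one_lt₀ (by exact_mod_cast hp.one_lt)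
  by_cases hqp : p ∣ q
  · obtain rfl := (Nat.prime_dvd_prime_iff_eq hp hq).mp hqp
    exact hpnorm.ge
  · rw [norm_natCast_eq_one_of_not_dvd hp hp1 hqp, ← hpnorm]
    exact hp1.le

lemma IsOfFinOrder.inv_le_norm_one_sub (hp : p.Prime) (hpnorm : ‖(p : K)‖ = (p : ℝ)⁻¹) {η : K}
    (hη : IsOfFinOrder η) (hη1 : η ≠ 1) : (p : ℝ)⁻¹ ≤ ‖1 - η‖ := by
  obtain ⟨q, hq, hqη⟩ := Nat.exists_prime_and_dvd (mt orderOf_eq_one_iff.mp hη1)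
  exact (inv_le_norm_natCast_of_prime hp hpnorm hq).trans (hη.norm_natCast_le_norm_one_sub hq hqη)

lemma IsOfFinOrder.inv_le_norm_sub (hp : p.Prime) (hpnorm : ‖(p : K)‖ = (p : ℝ)⁻¹) {ξ τ : K}
    (hξ : IsOfFinOrder ξ) (hτ : IsOfFinOrder τ) (hne : ξ ≠ τ) : (p : ℝ)⁻¹ ≤ ‖ξ - τ‖ := by
  have hτ0 : τ ≠ 0 := by
    rintro rfl
    simpa using hτ.norm_eq_one
  have hτinv : IsOfFinOrder τ⁻¹ := by
    obtain ⟨n, hn, h⟩ := isOfFinOrder_iff_pow_eq_one.mp hτ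
    exact isOfFinOrder_iff_pow_eq_one.mpr ⟨n, hn, by rw [inv_pow, h, inv_one]⟩
  have hquot : IsOfFinOrder (ξ * τ⁻¹) := hξ.mul hτinv
  have hquot1 : ξ * τ⁻¹ ≠ 1 := fun h => hne (by rwa [mul_inv_eq_one₀ hτ0] at h)
  calc (p : ℝ)⁻¹ ≤ ‖1 - ξ * τ⁻¹‖ := hquot.inv_le_norm_one_sub hp hpnorm hquot1
    _ = ‖ξ - τ‖ := by
        rw [← one_mul ‖1 - ξ * τ⁻¹‖, ← hτ.norm_eq_one, ← norm_mul, mul_one_sub,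
          mul_comm ξ, mul_inv_cancel_left₀ hτ0, norm_sub_rev]

lemma pow_prime_pow_eq_one_of_norm_one_sub_lt_one (hp : p.Prime) (hp1 : ‖(p : K)‖ < 1)
    {k m : ℕ} (hm : 0 < m) (hpm : ¬ p ∣ m) {η : K} (hη : η ^ (p ^ k * m) = 1)
    (hlt : ‖1 - η‖ < 1) : η ^ p ^ k = 1 := by
  have hμm : (η ^ p ^ k) ^ m = 1 := by rwa [← pow_mul]
  have hμ : IsOfFinOrder (η ^ p ^ k) := isOfFinOrder_iff_pow_eq_one.mpr ⟨m, hm, hμm⟩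
  by_contra hμ1
  obtain ⟨q, hq, hqμ⟩ := Nat.exists_prime_and_dvd (mt orderOf_eq_one_iff.mp hμ1)
  have hqm : q ∣ m := hqμ.trans (orderOf_dvd_of_pow_eq_one hμm)
  have hpq : ¬ p ∣ q := fun h => hpm ((Nat.prime_dvd_prime_iff_eq hp hq).mp h ▸ hqm)
  have hη1 : ‖η‖ = 1 := (isOfFinOrder_iff_pow_eq_one.mpr
    ⟨p ^ k * m, Nat.mul_pos (pow_pos hp.pos k) hm, hη⟩).norm_eq_one
  have : ‖(q : K)‖ ≤ ‖1 - η‖ :=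
    (hμ.norm_natCast_le_norm_one_sub hq hqμ).trans (norm_one_sub_pow_le hη1.le _)
  rw [norm_natCast_eq_one_of_not_dvd hp hp1 hpq] at this
  exact this.not_gt hlt

-- Distinct roots of unity are `p⁻¹` apart, so at most one of them lies within `p⁻¹` of `α`.
lemma exists_pos_le_norm_sub_of_isOfFinOrder (hp : p.Prime) (hpnorm : ‖(p : K)‖ = (p : ℝ)⁻¹)
    (α : K) : ∃ b > 0, ∀ ξ : K, IsOfFinOrder ξ → ξ ≠ α → b ≤ ‖ξ - α‖ := by
  by_cases hnear : ∃ τ : K, IsOfFinOrder τ ∧ τ ≠ α ∧ ‖τ - α‖ < (p : ℝ)⁻¹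
  · obtain ⟨τ, hτ, hτα, hnear⟩ := hnear
    refine ⟨‖τ - α‖, norm_pos_iff.mpr (sub_ne_zero.mpr hτα), fun ξ hξ _ => ?_⟩
    by_contra! hlt
    have hξτ : ‖ξ - τ‖ < (p : ℝ)⁻¹ := by
      calc ‖ξ - τ‖ = ‖(ξ - α) - (τ - α)‖ := by rw [sub_sub_sub_cancel_right]
        _ ≤ max ‖ξ - α‖ ‖τ - α‖ := norm_sub_le_max _ _
        _ < (p : ℝ)⁻¹ := max_lt (hlt.trans hnear) hnear
    by_cases hξτ' : ξ = τ
    · exact hlt.ne (by rw [hξτ'])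
    · exact hξτ.not_ge (hξ.inv_le_norm_sub hp hpnorm hτ hξτ')
  · simp only [not_exists, not_and, not_lt] at hnear
    exact ⟨(p : ℝ)⁻¹, inv_pos.mpr (by exact_mod_cast hp.pos), fun ξ hξ hξα => hnear ξ hξ hξα⟩

end ResidueChar

section GaussNorm

variable {K : Type*} [NontriviallyNormedField K]

lemma gaussNorm_eq_supNorm (F : K[X]) : gaussNorm F = F.supNorm := by
  rw [supNorm_def', gaussNorm]
  split_ifs with h
  · rw [← sup'_eq_sup h, apply_sup'_eq_sup'_comp h _ NNReal.coe_max]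
    rfl
  · simp [not_nonempty_iff_eq_empty.mp h]

lemma gaussNorm_pos {F : K[X]} (hF : F ≠ 0) : 0 < gaussNorm F := by
  rw [gaussNorm_eq_supNorm]
  exact (supNorm_nonneg F).lt_of_ne' (mt (supNorm_eq_zero_iff F).mp hF)

lemma gaussNorm_C (a : K) : gaussNorm (C a) = ‖a‖ := by
  rw [gaussNorm_eq_supNorm, supNorm_C]

lemma gaussNorm_X_sub_C (r : K) : gaussNorm (X - C r) = max 1 ‖r‖ := by
  rw [gaussNorm_eq_supNorm]
  obtain ⟨i, hi⟩ := exists_eq_supNorm (X - C r)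
  refine le_antisymm ?_ (max_le ?_ ?_)
  rw [hi]
  · rcases i with _ | _ | i <;> simp [coeff_X, coeff_C]
  · have := le_supNorm (X - C r) 1
    rwa [coeff_sub, coeff_X_one, coeff_C_succ, sub_zero, norm_one] at this
  · have := le_supNorm (X - C r) 0
    rwa [coeff_sub, coeff_X_zero, coeff_C_zero, zero_sub, norm_neg] at this

lemma norm_eval_eq_mul_prod_roots [IsAlgClosed K] (F : K[X]) (ξ : K) :
    ‖F.eval ξ‖ = ‖F.leadingCoeff‖ * (F.roots.map fun r => ‖ξ - r‖).prod := by
  rw [(IsAlgClosed.splits F).eval_eq_prod_roots, norm_mul]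
  exact congrArg _ ((map_multiset_prod (normHom : K →*₀ ℝ) _).trans (by rw [Multiset.map_map]; rfl))

variable [IsUltrametricDist K]

lemma gaussNorm_mul (F G : K[X]) : gaussNorm (F * G) = gaussNorm F * gaussNorm G := by
  simp only [gaussNorm_eq_supNorm]
  exact Polynomial.gaussNorm_mul (v := IsAbsoluteValue.toAbsoluteValue (norm : K → ℝ))
    isNonarchimedean_norm one_pos F G

lemma gaussNorm_multiset_prod (s : Multiset K[X]) : gaussNorm s.prod = (s.map gaussNorm).prod := by
  induction s using Multiset.induction_on with
  | empty => simpa using gaussNorm_C (1 : K)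
  | cons F s ih => simp [gaussNorm_mul, ih]

lemma norm_eval_le_gaussNorm (F : K[X]) {ξ : K} (hξ : ‖ξ‖ ≤ 1) : ‖F.eval ξ‖ ≤ gaussNorm F := by
  rw [eval_eq_sum_range, gaussNorm_eq_supNorm]
  refine norm_sum_le_of_forall_le_of_nonneg (supNorm_nonneg F) fun i _ => ?_
  rw [norm_mul, norm_pow]
  exact mul_le_of_le_one_right (norm_nonneg _) (pow_le_one₀ (norm_nonneg ξ) hξ) |>.trans
    (le_supNorm F i)

lemma norm_eval_le_norm_sub_mul_gaussNorm {F : K[X]} {α ξ : K} (hα : F.IsRoot α) (hα1 : ‖α‖ ≤ 1)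
    (hξ : ‖ξ‖ ≤ 1) : ‖F.eval ξ‖ ≤ ‖ξ - α‖ * gaussNorm F := by
  rw [← mul_divByMonic_eq_iff_isRoot.mpr hα, eval_mul, norm_mul, gaussNorm_mul, gaussNorm_X_sub_C,
    max_eq_left hα1, one_mul]
  simpa using mul_le_mul_of_nonneg_left (norm_eval_le_gaussNorm (F /ₘ (X - C α)) hξ)
    (norm_nonneg (ξ - α))

lemma gaussNorm_eq_mul_prod_roots [IsAlgClosed K] (F : K[X]) :
    gaussNorm F = ‖F.leadingCoeff‖ * (F.roots.map fun r => max 1 ‖r‖).prod := by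
  conv_lhs => rw [(IsAlgClosed.splits F).eq_prod_roots]
  simp [gaussNorm_mul, gaussNorm_C, gaussNorm_multiset_prod, Multiset.map_map, gaussNorm_X_sub_C]

end GaussNorm

section InfF

variable {K : Type*} [NontriviallyNormedField K] {p : ℕ}

lemma infF_le {F : K[X]} {ξ : K} (hξ : IsOfFinOrder ξ) (hFξ : F.eval ξ ≠ 0) :
    infF F ≤ ‖F.eval ξ‖ :=
  csInf_le ⟨0, by rintro _ ⟨_, -, -, rfl⟩; exact norm_nonneg _⟩ ⟨ξ, hξ, hFξ, rfl⟩

variable [IsUltrametricDist K] [IsAlgClosed K]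

lemma infF_pos (hp : p.Prime) (hpnorm : ‖(p : K)‖ = (p : ℝ)⁻¹) {F : K[X]}
    (hF : ∃ ξ : K, IsOfFinOrder ξ ∧ F.eval ξ ≠ 0) : 0 < infF F := by
  obtain ⟨ξ₀, hξ₀, hFξ₀⟩ := hF
  have hF0 : F ≠ 0 := by rintro rfl; exact hFξ₀ (eval_zero)
  choose b hb hbξ using exists_pos_le_norm_sub_of_isOfFinOrder (K := K) hp hpnorm
  have hbound : ∀ ξ, IsOfFinOrder ξ → F.eval ξ ≠ 0 →
      ‖F.leadingCoeff‖ * (F.roots.map b).prod ≤ ‖F.eval ξ‖ := by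
    intro ξ hξ hFξ
    rw [norm_eval_eq_mul_prod_roots]
    refine mul_le_mul_of_nonneg_left (Multiset.prod_map_le_prod_map₀ _ _
      (fun r _ => (hb r).le) fun r hr => hbξ r ξ hξ ?_) (norm_nonneg _)
    rintro rfl
    exact hFξ (isRoot_of_mem_roots hr)
  have hpos : 0 < ‖F.leadingCoeff‖ * (F.roots.map b).prod :=
    mul_pos (norm_pos_iff.mpr (leadingCoeff_ne_zero.mpr hF0))
      (Multiset.prod_pos fun r hr => by obtain ⟨r, -, rfl⟩ := Multiset.mem_map.mp hr; exact hb r)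
  refine hpos.trans_le (le_csInf ⟨_, ξ₀, hξ₀, hFξ₀, rfl⟩ ?_)
  rintro _ ⟨ξ, hξ, hFξ, rfl⟩
  exact hbound ξ hξ hFξ

end InfF

section Cluster

variable {K : Type*} [NormedField K] [IsUltrametricDist K] [IsAlgClosed K] {p k m : ℕ}

lemma inv_pow_le_prod_norm_one_sub (hp : p.Prime) (hpnorm : ‖(p : K)‖ = (p : ℝ)⁻¹) (hm : 0 < m)
    (hpm : ¬ p ∣ m) {T : Finset K} (hT : ∀ ξ ∈ T, ξ ^ (p ^ k * m) = 1 ∧ ξ ≠ 1 ∧ ‖1 - ξ‖ < 1) :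
    (p : ℝ)⁻¹ ^ k ≤ ∏ ξ ∈ T, ‖1 - ξ‖ := by
  classical
  have hp1 : ‖(p : K)‖ < 1 := hpnorm ▸ inv_lt_one_of_one_lt₀ (by exact_mod_cast hp.one_lt)
  have hp0 : (p : K) ≠ 0 :=
    norm_pos_iff.mp (by rw [hpnorm]; exact inv_pos.mpr (by exact_mod_cast hp.pos))
  have : NeZero ((p ^ k : ℕ) : K) := ⟨by rw [Nat.cast_pow]; exact pow_ne_zero k hp0⟩
  obtain ⟨ω, hω⟩ := HasEnoughRootsOfUnity.exists_primitiveRoot K (p ^ k)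
  calc (p : ℝ)⁻¹ ^ k = ‖((p ^ k : ℕ) : K)‖ := by rw [Nat.cast_pow, norm_pow, hpnorm]
    _ ≤ ∏ ξ ∈ T, ‖1 - ξ‖ := by
      refine hω.norm_natCast_le_prod_norm_one_sub (pow_pos hp.pos k) fun ξ hξ => ?_
      obtain ⟨hξN, hξ1, hξlt⟩ := hT ξ hξ
      exact mem_erase.mpr ⟨hξ1, (Polynomial.mem_nthRootsFinset (pow_pos hp.pos k) _).mpr
        (pow_prime_pow_eq_one_of_norm_one_sub_lt_one hp hp1 hm hpm hξN hξlt)⟩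

lemma inv_pow_mul_le_prod_norm_sub (hp : p.Prime) (hpnorm : ‖(p : K)‖ = (p : ℝ)⁻¹) (hm : 0 < m)
    (hpm : ¬ p ∣ m) {Y : Finset K} (hY : ∀ y ∈ Y, y ^ (p ^ k * m) = 1) {α : K} {δ : ℝ}
    (hδ1 : δ ≤ 1) (hδ : ∀ y ∈ Y, δ ≤ ‖y - α‖) :
    (p : ℝ)⁻¹ ^ k * δ ≤ ∏ y ∈ Y, ‖y - α‖ := by
  classical
  have hpk : 0 ≤ (p : ℝ)⁻¹ ^ k := by positivity
  have hpk1 : (p : ℝ)⁻¹ ^ k ≤ 1 :=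
    pow_le_one₀ (by positivity) (inv_le_one_of_one_le₀ (by exact_mod_cast hp.one_le))
  set S := Y.filter (‖· - α‖ < 1)
  have hSY : ∏ y ∈ S, ‖y - α‖ ≤ ∏ y ∈ Y, ‖y - α‖ :=
    prod_le_prod_of_subset_of_one_le (filter_subset _ _) (fun _ _ => norm_nonneg _)
      fun y hy hyS => not_lt.mp fun h => hyS (mem_filter.mpr ⟨hy, h⟩)
  refine le_trans ?_ hSY
  rcases S.eq_empty_or_nonempty with hS | hS
  · rw [hS, prod_empty]
    nlinarith
  obtain ⟨y₀, hy₀S, hmin⟩ := S.exists_min_image (‖· - α‖) hS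
  have hy₀Y : y₀ ∈ Y := (mem_filter.mp hy₀S).1
  have hy₀1 : ‖y₀‖ = 1 := (isOfFinOrder_iff_pow_eq_one.mpr
    ⟨_, Nat.mul_pos (pow_pos hp.pos k) hm, hY y₀ hy₀Y⟩).norm_eq_one
  have hy₀0 : y₀ ≠ 0 := norm_ne_zero_iff.mp (by rw [hy₀1]; exact one_ne_zero)
  have hclose : ∀ y ∈ S.erase y₀, ‖1 - y / y₀‖ ≤ ‖y - α‖ := by
    intro y hy
    calc ‖1 - y / y₀‖ = ‖(y₀ - α) - (y - α)‖ := by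
          rw [← div_self hy₀0, ← sub_div, norm_div, hy₀1, div_one, sub_sub_sub_cancel_right]
      _ ≤ ‖y - α‖ := (norm_sub_le_max _ _).trans (max_le (hmin y (mem_of_mem_erase hy)) le_rfl)
  have hcluster : (p : ℝ)⁻¹ ^ k ≤ ∏ y ∈ S.erase y₀, ‖1 - y / y₀‖ := by
    rw [← prod_image (f := fun ξ => ‖1 - ξ‖) (g := (· / y₀))
      fun y _ z _ h => (div_left_inj' hy₀0).mp h]
    refine inv_pow_le_prod_norm_one_sub hp hpnorm hm hpm fun ξ hξ => ?_
    obtain ⟨y, hy, rfl⟩ := mem_image.mp hξ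
    obtain ⟨hyS, hylt⟩ := mem_filter.mp (mem_of_mem_erase hy)
    exact ⟨by rw [div_pow, hY y hyS, hY y₀ hy₀Y, div_one],
      fun h => ne_of_mem_erase hy ((div_eq_one_iff_eq hy₀0).mp h),
      (hclose y hy).trans_lt hylt⟩
  rw [← mul_prod_erase S _ hy₀S, mul_comm]
  exact mul_le_mul (hδ y₀ hy₀Y) (hcluster.trans (prod_le_prod (fun _ _ => norm_nonneg _) hclose))
    hpk (norm_nonneg _)

end Cluster

section RootBounds

variable {K : Type*} [NontriviallyNormedField K] [IsUltrametricDist K]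

lemma prod_norm_sub_le_max_pow_card {Y : Finset K} (hY : ∀ y ∈ Y, ‖y‖ ≤ 1) (α : K) :
    ∏ y ∈ Y, ‖y - α‖ ≤ max 1 ‖α‖ ^ #Y := by
  rw [← prod_const]
  exact prod_le_prod (fun _ _ => norm_nonneg _)
    fun y hy => (norm_sub_le_max y α).trans (max_le_max (hY y hy) le_rfl)

lemma inv_pow_mul_max_pow_card_le_prod_norm_sub [IsAlgClosed K] {p k m : ℕ} (hp : p.Prime)
    (hpnorm : ‖(p : K)‖ = (p : ℝ)⁻¹) (hm : 0 < m) (hpm : ¬ p ∣ m) {F : K[X]} {Y : Finset K}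
    (hY : ∀ y ∈ Y, y ^ (p ^ k * m) = 1) {δ : ℝ} (hδ1 : δ ≤ 1)
    (hFY : ∀ y ∈ Y, δ * gaussNorm F ≤ ‖F.eval y‖) {α : K} (hα : α ∈ F.roots) :
    (p : ℝ)⁻¹ ^ k * δ * max 1 ‖α‖ ^ #Y ≤ ∏ y ∈ Y, ‖y - α‖ := by
  have hnorm : ∀ y ∈ Y, ‖y‖ = 1 := fun y hy => (isOfFinOrder_iff_pow_eq_one.mpr
    ⟨_, Nat.mul_pos (pow_pos hp.pos k) hm, hY y hy⟩).norm_eq_one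
  rcases le_or_gt ‖α‖ 1 with hα1 | hα1
  · rw [max_eq_left hα1, one_pow, mul_one]
    refine inv_pow_mul_le_prod_norm_sub hp hpnorm hm hpm hY hδ1 fun y hy => ?_
    have hG := gaussNorm_pos (ne_zero_of_mem_roots hα)
    refine le_of_mul_le_mul_right ((hFY y hy).trans ?_) hG
    exact norm_eval_le_norm_sub_mul_gaussNorm (isRoot_of_mem_roots hα) hα1 (hnorm y hy).le
  · have hfar : ∀ y ∈ Y, ‖y - α‖ = max 1 ‖α‖ := fun y hy => by
      rw [norm_sub_eq_max_of_norm_ne_norm (by rw [hnorm y hy]; exact hα1.ne), hnorm y hy]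
    rw [prod_congr rfl hfar, prod_const]
    have hpk : 0 ≤ (p : ℝ)⁻¹ ^ k := by positivity
    have hpk1 : (p : ℝ)⁻¹ ^ k ≤ 1 :=
      pow_le_one₀ (by positivity) (inv_le_one_of_one_le₀ (by exact_mod_cast hp.one_le))
    exact mul_le_of_le_one_left (by positivity) (by nlinarith)

lemma pow_mul_pow_le_prod_norm_eval_le [IsAlgClosed K] (F : K[X]) {Y : Finset K} {c : ℝ}
    (hc : 0 ≤ c) (hlow : ∀ r ∈ F.roots, c * max 1 ‖r‖ ^ #Y ≤ ∏ y ∈ Y, ‖y - r‖)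
    (hup : ∀ r ∈ F.roots, ∏ y ∈ Y, ‖y - r‖ ≤ max 1 ‖r‖ ^ #Y) :
    c ^ F.natDegree * gaussNorm F ^ #Y ≤ ∏ y ∈ Y, ‖F.eval y‖ ∧
      ∏ y ∈ Y, ‖F.eval y‖ ≤ gaussNorm F ^ #Y := by
  have hprod : ∏ y ∈ Y, ‖F.eval y‖ =
      ‖F.leadingCoeff‖ ^ #Y * (F.roots.map fun r => ∏ y ∈ Y, ‖y - r‖).prod := by
    simp_rw [norm_eval_eq_mul_prod_roots, prod_mul_distrib, prod_const]
    exact congrArg _ (Multiset.prod_map_prod_map Y.val F.roots)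
  have hG : gaussNorm F ^ #Y =
      ‖F.leadingCoeff‖ ^ #Y * (F.roots.map fun r => max 1 ‖r‖ ^ #Y).prod := by
    rw [gaussNorm_eq_mul_prod_roots, mul_pow, Multiset.prod_map_pow]
  have hcG : c ^ F.natDegree * gaussNorm F ^ #Y =
      ‖F.leadingCoeff‖ ^ #Y * (F.roots.map fun r => c * max 1 ‖r‖ ^ #Y).prod := by
    rw [hG, Multiset.prod_map_mul, Multiset.map_const', Multiset.prod_replicate,
      ← (IsAlgClosed.splits F).natDegree_eq_card_roots]
    ring
  rw [hprod, hcG, hG]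
  exact ⟨mul_le_mul_of_nonneg_left
      (Multiset.prod_map_le_prod_map₀ _ _ (fun _ _ => by positivity) hlow) (by positivity),
    mul_le_mul_of_nonneg_left
      (Multiset.prod_map_le_prod_map₀ _ _ (fun _ _ => by positivity) hup) (by positivity)⟩

end RootBounds

lemma abs_inv_mul_log_sub_log_le {P G c : ℝ} {n d : ℕ} (hn : 0 < n) (hc : 0 < c) (hG : 0 < G)
    (hlow : c ^ d * G ^ n ≤ P) (hup : P ≤ G ^ n) :
    |1 / n * Real.log P - Real.log G| ≤ d / n * -Real.log c := by
  have hP : 0 < P := lt_of_lt_of_le (by positivity) hlow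
  have hlogup : Real.log P ≤ n * Real.log G := by
    simpa [Real.log_pow] using Real.log_le_log hP hup
  have hloglow : d * Real.log c + n * Real.log G ≤ Real.log P := by
    simpa [Real.log_mul, Real.log_pow, hc.ne', hG.ne'] using Real.log_le_log (by positivity) hlow
  have hn' : (0 : ℝ) < n := by exact_mod_cast hn
  rw [show 1 / (n : ℝ) * Real.log P - Real.log G = (Real.log P - n * Real.log G) / n by
    field_simp, abs_div, abs_of_pos hn', div_mul_eq_mul_div, div_le_div_iff_of_pos_right hn']
  exact abs_le.mpr ⟨by linarith, by nlinarith [Real.log_le_sub_one_of_pos hc]⟩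

lemma abs_average_log_norm_eval_sub_log_gaussNorm_le {K : Type*} [NontriviallyNormedField K]
    [IsUltrametricDist K] [IsAlgClosed K] {p k m : ℕ} (hp : p.Prime)
    (hpnorm : ‖(p : K)‖ = (p : ℝ)⁻¹) (hm : 0 < m) (hpm : ¬ p ∣ m) {F : K[X]} (hF : F ≠ 0)
    {Y : Finset K} (hYne : Y.Nonempty) (hY : ∀ y ∈ Y, y ^ (p ^ k * m) = 1)
    (hYF : ∀ y ∈ Y, F.eval y ≠ 0) :
    |1 / (#Y : ℝ) * ∑ y ∈ Y, Real.log ‖F.eval y‖ - Real.log (gaussNorm F)|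
      ≤ (F.natDegree : ℝ) / #Y * (cF F + k * Real.log p) := by
  have hYfin : ∀ y ∈ Y, IsOfFinOrder y := fun y hy =>
    isOfFinOrder_iff_pow_eq_one.mpr ⟨_, Nat.mul_pos (pow_pos hp.pos k) hm, hY y hy⟩
  obtain ⟨y₀, hy₀⟩ := hYne
  have hG := gaussNorm_pos hF
  have hinf : 0 < infF F := infF_pos hp hpnorm ⟨y₀, hYfin y₀ hy₀, hYF y₀ hy₀⟩
  set δ := infF F / gaussNorm F
  have hδ1 : δ ≤ 1 := div_le_one_of_le₀ ((infF_le (hYfin y₀ hy₀) (hYF y₀ hy₀)).trans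
    (norm_eval_le_gaussNorm F (hYfin y₀ hy₀).norm_eq_one.le)) hG.le
  have hδG : ∀ y ∈ Y, δ * gaussNorm F ≤ ‖F.eval y‖ := fun y hy => by
    rw [div_mul_cancel₀ _ hG.ne']
    exact infF_le (hYfin y hy) (hYF y hy)
  have hpk : 0 < (p : ℝ)⁻¹ ^ k := pow_pos (inv_pos.mpr (Nat.cast_pos.mpr hp.pos)) k
  have hδ : 0 < δ := div_pos hinf hG
  obtain ⟨hlow, hup⟩ := pow_mul_pow_le_prod_norm_eval_le F (mul_pos hpk hδ).le
    (fun r hr => inv_pow_mul_max_pow_card_le_prod_norm_sub hp hpnorm hm hpm hY hδ1 hδG hr)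
    (fun r _ => prod_norm_sub_le_max_pow_card (fun y hy => (hYfin y hy).norm_eq_one.le) r)
  have hc : -Real.log ((p : ℝ)⁻¹ ^ k * δ) = cF F + k * Real.log p := by
    rw [Real.log_mul hpk.ne' hδ.ne', Real.log_pow, Real.log_inv, cF]
    ring
  rw [← hc, ← Real.log_prod fun y hy => norm_ne_zero_iff.mpr (hYF y hy)]
  exact abs_inv_mul_log_sub_log_le (card_pos.mpr ⟨y₀, hy₀⟩) (mul_pos hpk hδ) hG hlow hup

lemma injective_pow_val_of_orderOf_eq {G : Type*} [Monoid G] {ζ : G} {N : ℕ} [NeZero N]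
    (hζ : orderOf ζ = N) : Function.Injective fun σ : (ZMod N)ˣ => ζ ^ (σ : ZMod N).val :=
  fun σ τ h => Units.ext <| ZMod.val_injective N <|
    pow_injOn_Iio_orderOf (by simp [hζ, ZMod.val_lt]) (by simp [hζ, ZMod.val_lt]) h

theorem stmt9_general {p : ℕ} (hp : p.Prime)
    {K : Type*} [NontriviallyNormedField K] [IsUltrametricDist K] [IsAlgClosed K]
    (hpnorm : ‖(p : K)‖ = (p : ℝ)⁻¹)
    (F : Polynomial K) (hF : F ≠ 0)
    (k m N : ℕ) (hm : 0 < m) (hpm : ¬ p ∣ m) (hNval : N = p ^ k * m)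
    (ζ : K) (hζ : orderOf ζ = N)
    (M : Finset (ZMod N)ˣ) (hM : M.Nonempty)
    (hvan : ∀ σ ∈ M, F.eval (ζ ^ ((σ : ZMod N).val)) ≠ 0) :
    |(1 / (M.card : ℝ)) * ∑ σ ∈ M, Real.log ‖F.eval (ζ ^ ((σ : ZMod N).val))‖
        - Real.log (gaussNorm F)|
      ≤ ((F.natDegree : ℝ) / (M.card : ℝ)) * (cF F + k * Real.log p) := by
  classical
  have : NeZero N := ⟨hNval ▸ (Nat.mul_pos (pow_pos hp.pos k) hm).ne'⟩
  have hinj := (injective_pow_val_of_orderOf_eq hζ).injOn (s := M)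
  have hζN : ζ ^ (p ^ k * m) = 1 := hNval ▸ hζ ▸ pow_orderOf_eq_one ζ
  have hroots : ∀ σ ∈ M, (ζ ^ (σ : ZMod N).val) ^ (p ^ k * m) = 1 := fun σ _ => by
    rw [← pow_mul, mul_comm, pow_mul, hζN, one_pow]
  have key := abs_average_log_norm_eval_sub_log_gaussNorm_le hp hpnorm hm hpm hF (hM.image _)
    (forall_mem_image.mpr hroots) (forall_mem_image.mpr hvan)
  rwa [sum_image hinj, card_image_of_injOn hinj] at key

/-- Let `F ∈ ℂ_p[X]` be nonzero and `ζ` a root of unity of order `N = p^k·m`, `p ∤ m`.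
Identifying `Gal(ℚ(ζ)/ℚ)` with `(ZMod N)ˣ`, let `M` be a nonempty subset with
`F(σ(ζ)) ≠ 0` for all `σ ∈ M`. Then
`|(1/#M)·Σ_{σ∈M} log|F(σ(ζ))|_p − log|F|_p| ≤ (deg F / #M)·(c(F) + k·log p)`. -/
theorem stmt9 {p : ℕ} (hp : p.Prime)
    {K : Type*} [NontriviallyNormedField K] [IsUltrametricDist K] [IsAlgClosed K]
    [CompleteSpace K] (hpnorm : ‖(p : K)‖ = (p : ℝ)⁻¹)
    (F : Polynomial K) (hF : F ≠ 0)
    (k m N : ℕ) (hm : 0 < m) (hpm : ¬ p ∣ m) (hNval : N = p ^ k * m)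
    (ζ : K) (hζ : orderOf ζ = N)
    (M : Finset (ZMod N)ˣ) (hM : M.Nonempty)
    (hvan : ∀ σ ∈ M, F.eval (ζ ^ ((σ : ZMod N).val)) ≠ 0) :
    |(1 / (M.card : ℝ)) * ∑ σ ∈ M, Real.log ‖F.eval (ζ ^ ((σ : ZMod N).val))‖
        - Real.log (gaussNorm F)|
      ≤ ((F.natDegree : ℝ) / (M.card : ℝ)) * (cF F + k * Real.log p) :=
  stmt9_general hp hpnorm F hF k m N hm hpm hNval ζ hζ M hM hvan
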